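/- arXiv:2510.11237 — 2 statements merged into one kernel-verified Lean document; each statement's English description precedes it below -/
import Mathlib

section
/- Let Q, Q̂ : ℝⁿ → ℝ be nonnegative functionals and c a constant such that (1−ε)(Q(x) − c) ≤ Q̂(x) ≤ (1+ε)(Q(x) − c) for all x in a subspace 𝒵, where 0 ≤ ε < 1 and Q(x) − c ≥ 0 on 𝒵. Let x₋, x ∈ 𝒵 with Q̂(x) ≤ Q̂(x₋), Q̂(x) > 0, and set Δ = Q̂(x₋) − Q̂(x). If Δ / Q̂(x) ≥ 2ε/(1−ε), then Q(x₋) ≥ Q(x). -/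
/-!
Write `a = Q xm - c`, `b = Q x - c`. A relative decrease of `2ε/(1-ε)` means
`(1+ε) Qh x ≤ (1-ε) Qh xm`, and the two-sided distortion bounds then give
`(1+ε)(1-ε) b ≤ (1+ε) Qh x ≤ (1-ε) Qh xm ≤ (1-ε)(1+ε) a`; cancel `1 - ε² > 0`.
-/

lemma one_add_mul_le_one_sub_mul_of_div_ge {p q ε : ℝ} (hq : 0 < q) (hε : ε < 1)
    (h : (p - q) / q ≥ 2 * ε / (1 - ε)) :
    (1 + ε) * q ≤ (1 - ε) * p := by
  rw [ge_iff_le, div_le_div_iff₀ (by linarith) hq] at h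
  linarith

lemma le_of_distortion_of_mul_le_mul {a b p q ε : ℝ} (hε0 : -1 < ε) (hε1 : ε < 1)
    (hp : p ≤ (1 + ε) * a) (hq : (1 - ε) * b ≤ q) (hpq : (1 + ε) * q ≤ (1 - ε) * p) :
    b ≤ a := by
  have hplus : 0 < 1 + ε := by linarith
  have hminus : 0 < 1 - ε := by linarith
  refine le_of_mul_le_mul_left ?_ (mul_pos hplus hminus)
  calc (1 + ε) * (1 - ε) * b = (1 + ε) * ((1 - ε) * b) := by ring
    _ ≤ (1 + ε) * q := by gcongr
    _ ≤ (1 - ε) * p := hpq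
    _ ≤ (1 - ε) * ((1 + ε) * a) := by gcongr
    _ = (1 + ε) * (1 - ε) * a := by ring

theorem sketched_sufficient_decrease_general
    {n : ℕ} (Q Qh : (Fin n → ℝ) → ℝ) (c ε : ℝ)
    (𝒵 : Submodule ℝ (Fin n → ℝ))
    (hε0 : 0 ≤ ε) (hε1 : ε < 1)
    (hdist : ∀ x ∈ 𝒵, (1 - ε) * (Q x - c) ≤ Qh x ∧ Qh x ≤ (1 + ε) * (Q x - c))
    (xm x : Fin n → ℝ) (hxm : xm ∈ 𝒵) (hx : x ∈ 𝒵)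
    (hpos : 0 < Qh x)
    (hdec : (Qh xm - Qh x) / Qh x ≥ 2 * ε / (1 - ε)) :
    Q xm ≥ Q x := by
  have hgap := one_add_mul_le_one_sub_mul_of_div_ge hpos hε1 hdec
  have hshifted : Q x - c ≤ Q xm - c :=
    le_of_distortion_of_mul_le_mul (by linarith) hε1 (hdist xm hxm).2 (hdist x hx).1 hgap
  linarith

/-- Core inequality of Proposition 1: monotonicity of the exact functional under
sketching distortion, given a sufficient relative decrease of the sketched
functional. -/
theorem sketched_sufficient_decrease
    {n : ℕ} (Q Qh : (Fin n → ℝ) → ℝ) (c ε : ℝ)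
    (𝒵 : Submodule ℝ (Fin n → ℝ))
    (hε0 : 0 ≤ ε) (hε1 : ε < 1)
    (hQnn : ∀ x ∈ 𝒵, 0 ≤ Q x - c)
    (hdist : ∀ x ∈ 𝒵, (1 - ε) * (Q x - c) ≤ Qh x ∧ Qh x ≤ (1 + ε) * (Q x - c))
    (xm x : Fin n → ℝ) (hxm : xm ∈ 𝒵) (hx : x ∈ 𝒵)
    (hle : Qh x ≤ Qh xm) (hpos : 0 < Qh x)
    (hdec : (Qh xm - Qh x) / Qh x ≥ 2 * ε / (1 - ε)) :
    Q xm ≥ Q x :=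
  sketched_sufficient_decrease_general Q Qh c ε 𝒵 hε0 hε1 hdist xm x hxm hx hpos hdec
end

section
/- Let S ∈ ℝ^{s×m} satisfy (1−ε)‖x‖₂ ≤ ‖Sx‖₂ ≤ (1+ε)‖x‖₂ for all x in the column space of M ∈ ℝ^{m×k}, with 0 ≤ ε < 1, let λ > 0 and RᵀR = (SM)ᵀ(SM) + λI. Then for all y ∈ ℝ^k, (1−ε)²‖My‖₂² + λ‖y‖₂² ≤ ‖Ry‖₂² ≤ (1+ε)²‖My‖₂² + λ‖y‖₂²; hence the eigenvalues of R⁻ᵀ(MᵀM + λI)R⁻¹ lie in [(1+ε)⁻², (1−ε)⁻²]. -/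
open Finset Matrix

lemma dot_self_quad {n p : ℕ} (A : Matrix (Fin n) (Fin p) ℝ) (y : Fin p → ℝ) :
    ∑ i, A.mulVec y i ^ 2 = y ⬝ᵥ (Aᵀ * A).mulVec y := by
  have h1 : ∑ i, A.mulVec y i ^ 2 = A.mulVec y ⬝ᵥ A.mulVec y := by
    simp [dotProduct, pow_two]
  rw [h1]
  conv_rhs => rw [← Matrix.mulVec_mulVec, Matrix.dotProduct_mulVec,
    Matrix.vecMul_transpose]

/-- Quality of the randomized 'partly exact' preconditioner: with S an
ε-subspace embedding for the column space of M and RᵀR = (SM)ᵀ(SM) + λI, the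
quadratic form ‖Ry‖² is sandwiched between (1−ε)²‖My‖² + λ‖y‖² and
(1+ε)²‖My‖² + λ‖y‖², and the generalized Rayleigh quotients
(‖My‖² + λ‖y‖²)/‖Ry‖² lie in [(1+ε)⁻², (1−ε)⁻²]. -/
theorem randomized_preconditioner_quality
    {s m k : ℕ} (M : Matrix (Fin m) (Fin k) ℝ) (S : Matrix (Fin s) (Fin m) ℝ)
    (ε : ℝ) (hε0 : 0 ≤ ε) (hε1 : ε < 1) (lam : ℝ) (hlam : 0 < lam)
    (R : Matrix (Fin k) (Fin k) ℝ)
    (hR : Rᵀ * R = (S * M)ᵀ * (S * M) + lam • (1 : Matrix (Fin k) (Fin k) ℝ))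
    (hemb : ∀ y : Fin k → ℝ,
      (1 - ε) * Real.sqrt (∑ i, M.mulVec y i ^ 2)
          ≤ Real.sqrt (∑ i, S.mulVec (M.mulVec y) i ^ 2)
      ∧ Real.sqrt (∑ i, S.mulVec (M.mulVec y) i ^ 2)
          ≤ (1 + ε) * Real.sqrt (∑ i, M.mulVec y i ^ 2)) :
    (∀ y : Fin k → ℝ,
      (1 - ε) ^ 2 * (∑ i, M.mulVec y i ^ 2) + lam * ∑ i, y i ^ 2
          ≤ ∑ i, R.mulVec y i ^ 2
      ∧ ∑ i, R.mulVec y i ^ 2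
          ≤ (1 + ε) ^ 2 * (∑ i, M.mulVec y i ^ 2) + lam * ∑ i, y i ^ 2)
    ∧ ∀ y : Fin k → ℝ, y ≠ 0 →
        (1 + ε)⁻¹ ^ 2
            ≤ ((∑ i, M.mulVec y i ^ 2) + lam * ∑ i, y i ^ 2) / (∑ i, R.mulVec y i ^ 2)
        ∧ ((∑ i, M.mulVec y i ^ 2) + lam * ∑ i, y i ^ 2) / (∑ i, R.mulVec y i ^ 2)
            ≤ (1 - ε)⁻¹ ^ 2 := by
  -- key identity
  have hRy : ∀ y : Fin k → ℝ, ∑ i, R.mulVec y i ^ 2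
      = (∑ i, S.mulVec (M.mulVec y) i ^ 2) + lam * ∑ i, y i ^ 2 := by
    intro y
    have h1 := dot_self_quad R y
    have h2 := dot_self_quad (S * M) y
    rw [← Matrix.mulVec_mulVec] at h2
    rw [h1, hR, Matrix.add_mulVec, dotProduct_add, ← h2]
    congr 1
    simp [Matrix.smul_mulVec, dotProduct_smul, dotProduct, pow_two,
      Finset.mul_sum, mul_left_comm]
  -- squared embedding bounds
  have hsq : ∀ y : Fin k → ℝ,
      (1 - ε) ^ 2 * (∑ i, M.mulVec y i ^ 2) ≤ ∑ i, S.mulVec (M.mulVec y) i ^ 2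
      ∧ ∑ i, S.mulVec (M.mulVec y) i ^ 2 ≤ (1 + ε) ^ 2 * (∑ i, M.mulVec y i ^ 2) := by
    intro y
    obtain ⟨h1, h2⟩ := hemb y
    have hA : (0:ℝ) ≤ ∑ i, M.mulVec y i ^ 2 := by positivity
    have hB : (0:ℝ) ≤ ∑ i, S.mulVec (M.mulVec y) i ^ 2 := by positivity
    constructor
    · have h1' : ((1 - ε) * Real.sqrt (∑ i, M.mulVec y i ^ 2)) ^ 2
          ≤ (Real.sqrt (∑ i, S.mulVec (M.mulVec y) i ^ 2)) ^ 2 := by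
        exact pow_le_pow_left₀ (mul_nonneg (by linarith) (Real.sqrt_nonneg _)) h1 2
      rwa [mul_pow, Real.sq_sqrt hA, Real.sq_sqrt hB] at h1'
    · have h2' : (Real.sqrt (∑ i, S.mulVec (M.mulVec y) i ^ 2)) ^ 2
          ≤ ((1 + ε) * Real.sqrt (∑ i, M.mulVec y i ^ 2)) ^ 2 := by
        exact pow_le_pow_left₀ (Real.sqrt_nonneg _) h2 2
      rwa [mul_pow, Real.sq_sqrt hA, Real.sq_sqrt hB] at h2'
  have hmain : ∀ y : Fin k → ℝ,
      (1 - ε) ^ 2 * (∑ i, M.mulVec y i ^ 2) + lam * ∑ i, y i ^ 2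
          ≤ ∑ i, R.mulVec y i ^ 2
      ∧ ∑ i, R.mulVec y i ^ 2
          ≤ (1 + ε) ^ 2 * (∑ i, M.mulVec y i ^ 2) + lam * ∑ i, y i ^ 2 := by
    intro y
    obtain ⟨h1, h2⟩ := hsq y
    rw [hRy y]
    exact ⟨by linarith, by linarith⟩
  refine ⟨hmain, fun y hy => ?_⟩
  obtain ⟨j, hj⟩ := Function.ne_iff.mp hy
  have hj' : y j ≠ 0 := by simpa using hj
  have hypos : 0 < ∑ i, y i ^ 2 := by
    have h1 : 0 < y j ^ 2 := by positivity
    linarith [Finset.single_le_sum (fun (i : Fin k) _ => sq_nonneg (y i)) (Finset.mem_univ j)]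
  obtain ⟨hlow, hhigh⟩ := hmain y
  set A := ∑ i, M.mulVec y i ^ 2 with hA
  set B := ∑ i, y i ^ 2 with hB
  set D := ∑ i, R.mulVec y i ^ 2 with hD
  have hApos : (0:ℝ) ≤ A := by positivity
  have hDpos : 0 < D := by nlinarith [sq_nonneg (1 - ε)]
  have hop : (0:ℝ) < 1 + ε := by linarith
  have hom : (0:ℝ) < 1 - ε := by linarith
  constructor
  · rw [le_div_iff₀ hDpos, inv_pow, inv_mul_le_iff₀ (by positivity)]
    nlinarith [mul_nonneg (mul_nonneg hε0 hlam.le) hypos.le, mul_nonneg hε0 hε0,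
      mul_nonneg (mul_nonneg (mul_nonneg hε0 hε0) hlam.le) hypos.le]
  · rw [div_le_iff₀ hDpos, inv_pow, ← div_eq_inv_mul, le_div_iff₀ (by positivity)]
    nlinarith [mul_nonneg (mul_nonneg hε0 hlam.le) hypos.le,
      mul_nonneg (mul_nonneg (mul_nonneg hε0 hε0) hlam.le) hypos.le]
end
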